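/- Let K be a field and I an ideal of P = K[x₁,…,xₙ]. The set of leading-term ideals { LT_σ(I) : σ a monomial order on P } is finite. -/

import Mathlib

open MvPolynomial

/-- A monomial order on the exponent vectors `ν →₀ ℕ`: a linear order compatible with
addition and having `0` as least element. -/
structure MonomialOrd (ν : Type) where
  le : (ν →₀ ℕ) → (ν →₀ ℕ) → Prop
  le_refl : ∀ a, le a a
  le_trans : ∀ a b c, le a b → le b c → le a c
  le_antisymm : ∀ a b, le a b → le b a → a = b
  le_total : ∀ a b, le a b ∨ le b a
  add_le_add : ∀ a b c, le a b → le (a + c) (b + c)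
  zero_le : ∀ a, le 0 a

/-- `a` is the σ-largest exponent vector in the support of `f`
(so `X^a` is the σ-leading monomial of `f`). -/
def IsLeadingExp {K : Type} [Field K] {ν : Type} (σ : MonomialOrd ν)
    (f : MvPolynomial ν K) (a : ν →₀ ℕ) : Prop :=
  a ∈ f.support ∧ ∀ b ∈ f.support, σ.le b a

/-- The leading-term ideal `LT_σ(I)`: the ideal generated by the σ-leading monomials of the
nonzero elements of `I`. -/
noncomputable def ltIdeal {K : Type} [Field K] {ν : Type} (σ : MonomialOrd ν)
    (I : Ideal (MvPolynomial ν K)) : Ideal (MvPolynomial ν K) :=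
  Ideal.span { m | ∃ f ∈ I, ∃ a, IsLeadingExp σ f a ∧ m = monomial a (1 : K) }

/-- `G` is a σ-Gröbner basis of `I`: a finite subset of `I` whose σ-leading monomials
generate `LT_σ(I)`. -/
def IsGroebnerBasis {K : Type} [Field K] {ν : Type} (σ : MonomialOrd ν)
    (I : Ideal (MvPolynomial ν K)) (G : Finset (MvPolynomial ν K)) : Prop :=
  ↑G ⊆ (I : Set (MvPolynomial ν K)) ∧
    Ideal.span { m | ∃ g ∈ G, ∃ a, IsLeadingExp σ g a ∧ m = monomial a (1 : K) } = ltIdeal σ I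

/-!
Every monomial order on finitely many variables is a well-order by Dickson's lemma, so
Mathlib's division algorithm applies to it. Suppose infinitely many leading-term ideals occur.
By Noetherianity choose a maximal monomial ideal `⟨X^m : m ∈ M⟩` for which some family `T` of
orders, still producing infinitely many leading-term ideals, has every `m ∈ M` as a leading
exponent of `I` for each order in `T`. For some `σ ∈ T` the ideal `LT_σ(I)` is strictly larger,
so dividing a suitable element of `I` by the elements with leading exponents in `M` leaves a
nonzero remainder `r ∈ I` with no monomial in the ideal. Each order's leading exponent of `r`
is one of its finitely many monomials, so one of them serves for a subfamily of `T` that still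
produces infinitely many leading-term ideals; adding it to `M` contradicts maximality.
-/

namespace MonomialOrder

variable {ν K : Type} [Field K] (m : MonomialOrder ν)

/-- `r` is the remainder of `f` on division by `B`; it keeps the leading term of `f`. -/
theorem exists_sub_mem_span_ne_zero_forall_not_degree_le {B : Set (MvPolynomial ν K)}
    (hB : 0 ∉ B) {f : MvPolynomial ν K} (hf : f ≠ 0) (hfB : ∀ b ∈ B, ¬ m.degree b ≤ m.degree f) :
    ∃ r, f - r ∈ Ideal.span B ∧ r ≠ 0 ∧ ∀ c ∈ r.support, ∀ b ∈ B, ¬ m.degree b ≤ c := by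
  have hB0 : ∀ b ∈ B, b ≠ 0 := fun b hb h => hB (h ▸ hb)
  obtain ⟨g, r, hfr, hdeg, hr⟩ :=
    m.div_set (fun b hb => (m.leadingCoeff_ne_zero_iff.mpr (hB0 b hb)).isUnit) f
  refine ⟨r, ?_, fun hr0 => ?_, hr⟩
  · rw [hfr, add_sub_cancel_right]
    exact (Finsupp.mem_span_iff_linearCombination _ _ _).mpr ⟨g, rfl⟩
  have hcoeff : ∀ b : B, ((b : MvPolynomial ν K) * g b).coeff (m.degree f) = 0 := by
    intro b
    by_contra hne
    have hg0 : g b ≠ 0 := by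
      rintro h
      simp [h] at hne
    have heq : m.degree ((b : MvPolynomial ν K) * g b) = m.degree f :=
      m.toSyn.injective (le_antisymm (hdeg b) (m.le_degree (mem_support_iff.mpr hne)))
    rw [m.degree_mul (hB0 b b.2) hg0] at heq
    exact hfB b b.2 (heq ▸ le_self_add)
  apply m.coeff_degree_ne_zero_iff.mpr hf
  rw [congrArg (coeff (m.degree f)) hfr, hr0, add_zero, Finsupp.linearCombination_apply,
    Finsupp.sum, coeff_sum]
  exact Finset.sum_eq_zero fun b _ => by rw [smul_eq_mul, mul_comm]; exact hcoeff b

end MonomialOrder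

namespace MonomialOrd

variable {ν : Type} (σ : MonomialOrd ν)

/-- A copy of `ν →₀ ℕ` carrying the linear order `σ`. -/
def Syn (_σ : MonomialOrd ν) : Type := ν →₀ ℕ

noncomputable instance : AddCommMonoid σ.Syn := inferInstanceAs (AddCommMonoid (ν →₀ ℕ))

noncomputable instance : LinearOrder σ.Syn where
  le := σ.le
  le_refl := σ.le_refl
  le_trans := σ.le_trans
  le_antisymm := σ.le_antisymm
  le_total := σ.le_total
  toDecidableLE := Classical.decRel _

instance : IsOrderedAddMonoid σ.Syn where
  add_le_add_left a b h c := σ.add_le_add a b c h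

theorem le_of_le {a b : ν →₀ ℕ} (h : a ≤ b) : σ.le a b := by
  obtain ⟨c, rfl⟩ := le_iff_exists_add.mp h
  simpa [add_comm] using σ.add_le_add 0 c a (σ.zero_le c)

/-- Dickson's lemma makes `σ` a well-order, so `σ` is a monomial order in the sense of Mathlib. -/
noncomputable def toMonomialOrder [Finite ν] : MonomialOrder ν where
  syn := σ.Syn
  toSyn := AddEquiv.refl _
  toSyn_monotone _ _ := σ.le_of_le
  wellFoundedLT_syn :=
    have : WellQuasiOrderedLE σ.Syn :=
      Monotone.wellQuasiOrderedLE_of_wellQuasiOrderedLE_of_surjective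
        (f := (id : (ν →₀ ℕ) → σ.Syn)) (fun _ _ => σ.le_of_le) Function.surjective_id
    inferInstance

end MonomialOrd

section LeadingExp

variable {ν K : Type} [Field K] {σ : MonomialOrd ν} {f : MvPolynomial ν K} {a : ν →₀ ℕ}

theorem IsLeadingExp.ne_zero (h : IsLeadingExp σ f a) : f ≠ 0 := by
  rintro rfl
  simp [IsLeadingExp] at h

variable [Finite ν]

theorem isLeadingExp_degree (σ : MonomialOrd ν) (hf : f ≠ 0) :
    IsLeadingExp σ f (σ.toMonomialOrder.degree f) :=
  ⟨σ.toMonomialOrder.degree_mem_support hf, fun _ hb => σ.toMonomialOrder.le_degree hb⟩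

theorem IsLeadingExp.degree_eq (h : IsLeadingExp σ f a) : σ.toMonomialOrder.degree f = a :=
  σ.le_antisymm _ _ (h.2 _ (σ.toMonomialOrder.degree_mem_support h.ne_zero))
    (σ.toMonomialOrder.le_degree h.1)

end LeadingExp

section LeadingTermIdeal

variable {ν K : Type} [Field K] {I : Ideal (MvPolynomial ν K)} {M : Set (ν →₀ ℕ)}

def leadingExps (σ : MonomialOrd ν) (I : Ideal (MvPolynomial ν K)) : Set (ν →₀ ℕ) :=
  {a | ∃ f ∈ I, IsLeadingExp σ f a}

theorem ltIdeal_eq_span_leadingExps (σ : MonomialOrd ν) (I : Ideal (MvPolynomial ν K)) :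
    ltIdeal σ I = Ideal.span ((monomial · (1 : K)) '' leadingExps σ I) := by
  simp only [ltIdeal, leadingExps, Set.image, Set.mem_ofPred_eq]
  congr 1
  ext
  grind

theorem monomial_one_mem_span_monomial_one_iff {a : ν →₀ ℕ} :
    monomial a (1 : K) ∈ Ideal.span ((monomial · (1 : K)) '' M) ↔ ∃ m ∈ M, m ≤ a := by
  classical
  rw [mem_ideal_span_monomial_image, support_monomial, if_neg one_ne_zero]
  simp

variable [Finite ν]

theorem exists_ne_zero_forall_support_not_le (σ : MonomialOrd ν) (hM : M ⊆ leadingExps σ I)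
    (hI : ltIdeal σ I ≠ Ideal.span ((monomial · (1 : K)) '' M)) :
    ∃ r ∈ I, r ≠ 0 ∧ ∀ c ∈ r.support, ∀ m ∈ M, ¬ m ≤ c := by
  have hle : Ideal.span ((monomial · (1 : K)) '' M) ≤ ltIdeal σ I := by
    rw [ltIdeal_eq_span_leadingExps]
    exact Ideal.span_mono (Set.image_mono hM)
  have hnle : ¬ ltIdeal σ I ≤ Ideal.span ((monomial · (1 : K)) '' M) :=
    fun h => hI (le_antisymm h hle)
  rw [ltIdeal_eq_span_leadingExps, Ideal.span_le, Set.not_subset] at hnle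
  obtain ⟨_, ⟨a, ⟨f, hfI, hfa⟩, rfl⟩, haM⟩ := hnle
  have haM' : ∀ m ∈ M, ¬ m ≤ a := fun m hm hle =>
    haM (monomial_one_mem_span_monomial_one_iff.mpr ⟨m, hm, hle⟩)
  obtain ⟨r, hfr, hr0, hr⟩ := σ.toMonomialOrder.exists_sub_mem_span_ne_zero_forall_not_degree_le
    (B := {g | g ∈ I ∧ ∃ m ∈ M, IsLeadingExp σ g m})
    (fun ⟨_, _, _, h0⟩ => h0.ne_zero rfl) hfa.ne_zero
    (by rintro b ⟨-, m, hm, hbm⟩; rw [hbm.degree_eq, hfa.degree_eq]; exact haM' m hm)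
  refine ⟨r, ?_, hr0, fun c hc m hm hle => ?_⟩
  · simpa using I.sub_mem hfI (Ideal.span_le.mpr (fun _ hg => hg.1) hfr)
  · obtain ⟨g, hgI, hgm⟩ := hM hm
    exact hr c hc g ⟨hgI, m, hm, hgm⟩ (hgm.degree_eq ▸ hle)

theorem exists_infinite_image_isLeadingExp {β : Type*} {F : MonomialOrd ν → β}
    {T : Set (MonomialOrd ν)} (hT : (F '' T).Infinite) {r : MvPolynomial ν K} (hr : r ≠ 0) :
    ∃ a ∈ r.support, (F '' {σ ∈ T | IsLeadingExp σ r a}).Infinite := by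
  by_contra! h
  refine hT ((r.support.finite_toSet.biUnion h).subset ?_)
  rintro _ ⟨σ, hσ, rfl⟩
  exact Set.mem_biUnion (isLeadingExp_degree σ hr).1 ⟨σ, ⟨hσ, isLeadingExp_degree σ hr⟩, rfl⟩

theorem exists_not_le_infinite_image_ltIdeal_insert {T : Set (MonomialOrd ν)}
    (hT : ((ltIdeal · I) '' T).Infinite) (hM : ∀ σ ∈ T, M ⊆ leadingExps σ I) :
    ∃ a, (∀ m ∈ M, ¬ m ≤ a) ∧
      ∃ T', ((ltIdeal · I) '' T').Infinite ∧ ∀ σ ∈ T', insert a M ⊆ leadingExps σ I := by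
  obtain ⟨_, ⟨σ, hσ, rfl⟩, hσM⟩ :=
    (hT.sdiff (Set.finite_singleton (Ideal.span ((monomial · (1 : K)) '' M)))).nonempty
  obtain ⟨r, hrI, hr0, hr⟩ := exists_ne_zero_forall_support_not_le σ (hM σ hσ) hσM
  obtain ⟨a, ha, haT⟩ := exists_infinite_image_isLeadingExp hT hr0
  exact ⟨a, hr a ha, _, haT, fun τ hτ => Set.insert_subset ⟨r, hrI, hτ.2⟩ (hM τ hτ.1)⟩

end LeadingTermIdeal

/-- the set of leading-term ideals of a fixed ideal `I`, as the monomial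
order varies, is finite. -/
theorem finite_leading_term_ideals {K : Type} [Field K] {n : ℕ}
    (I : Ideal (MvPolynomial (Fin n) K)) :
    Set.Finite { J : Ideal (MvPolynomial (Fin n) K) |
      ∃ σ : MonomialOrd (Fin n), J = ltIdeal σ I } := by
  by_contra hinf
  have hT : ((ltIdeal · I) '' Set.univ).Infinite := by
    simpa [Set.image_univ, Set.range, eq_comm] using hinf
  let S : Set (Ideal (MvPolynomial (Fin n) K)) :=
    {J | ∃ M T, J = Ideal.span ((monomial · (1 : K)) '' M) ∧
      ((ltIdeal · I) '' T).Infinite ∧ ∀ σ ∈ T, M ⊆ leadingExps σ I}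
  obtain ⟨_, ⟨M, T, rfl, hT, hM⟩, hmax⟩ := set_has_maximal_iff_noetherian.mpr inferInstance S
    ⟨_, ∅, Set.univ, rfl, hT, fun _ _ => Set.empty_subset _⟩
  obtain ⟨a, haM, T', hT', hM'⟩ := exists_not_le_infinite_image_ltIdeal_insert hT hM
  refine hmax _ ⟨insert a M, T', rfl, hT', hM'⟩ (lt_of_le_not_ge
    (Ideal.span_mono (Set.image_mono (Set.subset_insert a M))) fun hle => ?_)
  obtain ⟨m, hm, hma⟩ := monomial_one_mem_span_monomial_one_iff.mp
    (hle (Ideal.subset_span ⟨a, Set.mem_insert a M, rfl⟩))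
  exact haM m hm hma
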